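/- For λ, λ' ∈ k, the unital associative k-algebras R_λ and R_{λ'} are isomorphic if and only if λ' = λ or λλ' = 1. -/
import Mathlib


/-- The relations defining `R_λ = k⟨x, y⟩ / (x², y², xy − λyx)`:
each generator of the ideal is related to `0`. -/
def Rrel (k : Type*) [Field k] (l : k) :
    FreeAlgebra k (Fin 2) → FreeAlgebra k (Fin 2) → Prop :=
  fun a b => b = 0 ∧
    (a = FreeAlgebra.ι k 0 * FreeAlgebra.ι k 0 ∨
     a = FreeAlgebra.ι k 1 * FreeAlgebra.ι k 1 ∨
     a = FreeAlgebra.ι k 0 * FreeAlgebra.ι k 1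
        - l • (FreeAlgebra.ι k 1 * FreeAlgebra.ι k 0))

/-- Model algebra: 4-dim with basis 1, x, y, yx; xy = l•yx, x²=y²=0. -/
@[ext] structure Quad (k : Type*) [Field k] (l : k) where
  a : k
  b : k
  c : k
  d : k

namespace Quad
variable {k : Type*} [Field k] {l : k}

instance : Add (Quad k l) := ⟨fun p q => ⟨p.a+q.a, p.b+q.b, p.c+q.c, p.d+q.d⟩⟩
instance : Zero (Quad k l) := ⟨⟨0,0,0,0⟩⟩
instance : Neg (Quad k l) := ⟨fun p => ⟨-p.a, -p.b, -p.c, -p.d⟩⟩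
instance : SMul k (Quad k l) := ⟨fun r p => ⟨r*p.a, r*p.b, r*p.c, r*p.d⟩⟩
instance : One (Quad k l) := ⟨⟨1,0,0,0⟩⟩
instance : Mul (Quad k l) :=
  ⟨fun p q => ⟨p.a*q.a, p.a*q.b+p.b*q.a, p.a*q.c+p.c*q.a,
    p.a*q.d+p.d*q.a + l*(p.b*q.c) + p.c*q.b⟩⟩

@[simp] lemma add_a (p q : Quad k l) : (p+q).a = p.a+q.a := rfl
@[simp] lemma add_b (p q : Quad k l) : (p+q).b = p.b+q.b := rfl
@[simp] lemma add_c (p q : Quad k l) : (p+q).c = p.c+q.c := rfl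
@[simp] lemma add_d (p q : Quad k l) : (p+q).d = p.d+q.d := rfl
@[simp] lemma zero_a : (0 : Quad k l).a = 0 := rfl
@[simp] lemma zero_b : (0 : Quad k l).b = 0 := rfl
@[simp] lemma zero_c : (0 : Quad k l).c = 0 := rfl
@[simp] lemma zero_d : (0 : Quad k l).d = 0 := rfl
@[simp] lemma neg_a (p : Quad k l) : (-p).a = -p.a := rfl
@[simp] lemma neg_b (p : Quad k l) : (-p).b = -p.b := rfl
@[simp] lemma neg_c (p : Quad k l) : (-p).c = -p.c := rfl
@[simp] lemma neg_d (p : Quad k l) : (-p).d = -p.d := rfl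
@[simp] lemma smul_a (r : k) (p : Quad k l) : (r • p).a = r*p.a := rfl
@[simp] lemma smul_b (r : k) (p : Quad k l) : (r • p).b = r*p.b := rfl
@[simp] lemma smul_c (r : k) (p : Quad k l) : (r • p).c = r*p.c := rfl
@[simp] lemma smul_d (r : k) (p : Quad k l) : (r • p).d = r*p.d := rfl
@[simp] lemma one_a : (1 : Quad k l).a = 1 := rfl
@[simp] lemma one_b : (1 : Quad k l).b = 0 := rfl
@[simp] lemma one_c : (1 : Quad k l).c = 0 := rfl
@[simp] lemma one_d : (1 : Quad k l).d = 0 := rfl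
@[simp] lemma mul_a (p q : Quad k l) : (p*q).a = p.a*q.a := rfl
@[simp] lemma mul_b (p q : Quad k l) : (p*q).b = p.a*q.b+p.b*q.a := rfl
@[simp] lemma mul_c (p q : Quad k l) : (p*q).c = p.a*q.c+p.c*q.a := rfl
@[simp] lemma mul_d (p q : Quad k l) :
    (p*q).d = p.a*q.d+p.d*q.a + l*(p.b*q.c) + p.c*q.b := rfl

instance instAddCommGroup : AddCommGroup (Quad k l) where
  add := (· + ·)
  zero := 0
  neg := Neg.neg
  add_assoc p q r := by ext <;> simp <;> ring
  zero_add p := by ext <;> simp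
  add_zero p := by ext <;> simp
  add_comm p q := by ext <;> simp <;> ring
  neg_add_cancel p := by ext <;> simp
  nsmul := nsmulRec
  zsmul := zsmulRec

instance instRing : Ring (Quad k l) where
  __ := instAddCommGroup (l := l)
  mul := (· * ·)
  one := 1
  left_distrib p q r := by ext <;> simp <;> ring
  right_distrib p q r := by ext <;> simp <;> ring
  zero_mul p := by ext <;> simp
  mul_zero p := by ext <;> simp
  mul_assoc p q r := by ext <;> simp <;> ring
  one_mul p := by ext <;> simp
  mul_one p := by ext <;> simp

instance instMulAction : MulAction k (Quad k l) where
  smul := (· • ·)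
  one_smul p := by ext <;> simp
  mul_smul r s p := by ext <;> simp <;> ring

instance instDistribMulAction : DistribMulAction k (Quad k l) where
  __ := instMulAction (l := l)
  smul_zero r := by ext <;> simp
  smul_add r p q := by ext <;> simp <;> ring

instance instModule : Module k (Quad k l) where
  __ := instDistribMulAction (l := l)
  add_smul r s p := by ext <;> simp <;> ring
  zero_smul p := by ext <;> simp

instance : Algebra k (Quad k l) :=
  Algebra.ofModule (fun r p q => by ext <;> simp <;> ring)
    (fun r p q => by ext <;> simp <;> ring)

@[simp] lemma algebraMap_apply (r : k) :
    algebraMap k (Quad k l) r = ⟨r,0,0,0⟩ := by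
  ext <;> simp [Algebra.algebraMap_eq_smul_one]

end Quad

section
variable {k : Type*} [Field k] {l : k}

namespace Quad

/-- generator x -/
def gX : Quad k l := ⟨0,1,0,0⟩
/-- generator y -/
def gY : Quad k l := ⟨0,0,1,0⟩

noncomputable abbrev RQ (k : Type*) [Field k] (l : k) := RingQuot (Rrel k l)

noncomputable def X : RQ k l := RingQuot.mkAlgHom k (Rrel k l) (FreeAlgebra.ι k 0)
noncomputable def Y : RQ k l := RingQuot.mkAlgHom k (Rrel k l) (FreeAlgebra.ι k 1)

lemma hXX : (X * X : RQ k l) = 0 := by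
  have := RingQuot.mkAlgHom_rel k
    (show Rrel k l (FreeAlgebra.ι k 0 * FreeAlgebra.ι k 0) 0 from ⟨rfl, Or.inl rfl⟩)
  simpa [X, map_mul] using this

lemma hYY : (Y * Y : RQ k l) = 0 := by
  have := RingQuot.mkAlgHom_rel k
    (show Rrel k l (FreeAlgebra.ι k 1 * FreeAlgebra.ι k 1) 0 from ⟨rfl, Or.inr (Or.inl rfl)⟩)
  simpa [Y, map_mul] using this

lemma hXY : (X * Y : RQ k l) = l • (Y * X) := by
  have := RingQuot.mkAlgHom_rel k
    (show Rrel k l (FreeAlgebra.ι k 0 * FreeAlgebra.ι k 1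
        - l • (FreeAlgebra.ι k 1 * FreeAlgebra.ι k 0)) 0 from ⟨rfl, Or.inr (Or.inr rfl)⟩)
  rw [map_sub, map_smul, map_mul, map_mul, map_zero, sub_eq_zero] at this
  exact this

lemma hXYX : (X * (Y * X) : RQ k l) = 0 := by
  rw [← mul_assoc, hXY, smul_mul_assoc, mul_assoc, hXX, mul_zero, smul_zero]

lemma hYXX : ((Y * X) * X : RQ k l) = 0 := by
  rw [mul_assoc, hXX, mul_zero]

lemma hYYX : (Y * (Y * X) : RQ k l) = 0 := by
  rw [← mul_assoc, hYY, zero_mul]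

lemma hYXY : ((Y * X) * Y : RQ k l) = 0 := by
  rw [mul_assoc, hXY, mul_smul_comm, hYYX, smul_zero]

lemma hYXYX : ((Y * X) * (Y * X) : RQ k l) = 0 := by
  rw [← mul_assoc, hYXY, zero_mul]

/-- the map out of the quotient -/
noncomputable def phi : RQ k l →ₐ[k] Quad k l :=
  RingQuot.liftAlgHom k ⟨FreeAlgebra.lift k ![gX, gY], by
    rintro x y ⟨rfl, (rfl | rfl | rfl)⟩ <;>
      simp [gX, gY] <;> ext <;> simp [sub_eq_add_neg] <;> ring⟩

@[simp] lemma phi_X : (phi (X : RQ k l)) = gX := by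
  simp [phi, X, RingQuot.liftAlgHom_mkAlgHom_apply]

@[simp] lemma phi_Y : (phi (Y : RQ k l)) = gY := by
  simp [phi, Y, RingQuot.liftAlgHom_mkAlgHom_apply]

/-- the inverse, as a bare function -/
noncomputable def psiFun : Quad k l → RQ k l :=
  fun p => p.a • 1 + p.b • X + p.c • Y + p.d • (Y * X)

lemma psiFun_mul (p q : Quad k l) : psiFun (p * q) = psiFun p * psiFun q := by
  simp only [psiFun, mul_a, mul_b, mul_c, mul_d]
  simp only [add_mul, mul_add, smul_mul_assoc, mul_smul_comm, one_mul, mul_one,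
    hXX, hYY, hXY, hXYX, hYXX, hYYX, hYXY, hYXYX, smul_zero, add_zero, zero_add,
    smul_smul]
  module

noncomputable def psi : Quad k l →ₐ[k] RQ k l where
  toFun := psiFun
  map_one' := by simp [psiFun]
  map_mul' := psiFun_mul
  map_zero' := by simp [psiFun]
  map_add' p q := by simp only [psiFun, add_a, add_b, add_c, add_d, add_smul]; module
  commutes' r := by simp [psiFun, Algebra.algebraMap_eq_smul_one]

noncomputable def equivQuad : RQ k l ≃ₐ[k] Quad k l := by
  refine AlgEquiv.ofAlgHom phi psi (AlgHom.ext fun p => ?_) ?_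
  · show phi (psiFun p) = p
    simp only [psiFun, map_add, map_smul, map_one, map_mul, phi_X, phi_Y]
    ext <;> simp [gX, gY] <;> ring
  · have key : (psi.comp phi).comp (RingQuot.mkAlgHom k (Rrel k l)) =
        (AlgHom.id k (RQ k l)).comp (RingQuot.mkAlgHom k (Rrel k l)) := by
      apply FreeAlgebra.hom_ext
      funext i
      fin_cases i <;>
        simp [phi, psi, psiFun, RingQuot.liftAlgHom_mkAlgHom_apply, gX, gY, X, Y]
    refine AlgHom.ext fun x => ?_
    obtain ⟨y, rfl⟩ := RingQuot.mkAlgHom_surjective k (Rrel k l) x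
    exact congrFun (congrArg DFunLike.coe key) y

end Quad
end

namespace Quad
variable {k : Type*} [Field k]

def swap (l l' : k) (h : l * l' = 1) : Quad k l ≃ₐ[k] Quad k l' where
  toFun p := ⟨p.a, p.c, p.b, l' * p.d⟩
  invFun p := ⟨p.a, p.c, p.b, l * p.d⟩
  left_inv p := by ext <;> simp <;> linear_combination p.d * h
  right_inv p := by ext <;> simp <;> linear_combination p.d * h
  map_mul' p q := by ext <;> simp <;> linear_combination p.b * q.c * h
  map_add' p q := by ext <;> simp <;> ring
  commutes' r := by ext <;> simp

lemma gXgX (l : k) : (gX * gX : Quad k l) = 0 := by ext <;> simp [gX]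
lemma gYgY (l : k) : (gY * gY : Quad k l) = 0 := by ext <;> simp [gY]
lemma gXgY (l : k) : (gX * gY : Quad k l) = l • (gY * gX) := by ext <;> simp [gX, gY]

theorem quad_forward {l l' : k} (e : Quad k l ≃ₐ[k] Quad k l') :
    l' = l ∨ l * l' = 1 := by
  set p := e gX with hp
  set q := e gY with hq
  have hp2 : p * p = 0 := by rw [hp, ← map_mul, gXgX, map_zero]
  have hq2 : q * q = 0 := by rw [hq, ← map_mul, gYgY, map_zero]
  have hpq : p * q = l • (q * p) := by
    rw [hp, hq, ← map_mul, ← map_mul, gXgY, map_smul]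
  have hqpne : q * p ≠ 0 := by
    rw [hp, hq, ← map_mul]
    intro h0
    have := e.injective (h0.trans (map_zero e).symm)
    have := congrArg Quad.d this
    simp [gX, gY] at this
  have hpa : p.a = 0 := by
    have := congrArg Quad.a hp2
    simpa [mul_self_eq_zero] using this
  have hqa : q.a = 0 := by
    have := congrArg Quad.a hq2
    simpa [mul_self_eq_zero] using this
  have h1 : (l' + 1) * (p.b * p.c) = 0 := by
    have := congrArg Quad.d hp2
    simp [hpa] at this
    linear_combination this
  have h2 : (l' + 1) * (q.b * q.c) = 0 := by
    have := congrArg Quad.d hq2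
    simp [hqa] at this
    linear_combination this
  have h3 : l' * (p.b * q.c) + p.c * q.b = l * (l' * (q.b * p.c) + q.c * p.b) := by
    have := congrArg Quad.d hpq
    simp [hpa, hqa] at this
    linear_combination this
  have hE : l' * (q.b * p.c) + q.c * p.b ≠ 0 := by
    intro h0
    apply hqpne
    ext <;> simp [hpa, hqa] <;> linear_combination h0
  by_cases hl' : l' = -1
  · left
    subst hl'
    -- h3 : -(pb qc) + pc qb = l * (-(qb pc) + qc pb)
    have hD : q.c * p.b - q.b * p.c ≠ 0 := by
      intro h0; apply hE; rw [neg_one_mul]; linear_combination h0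
    have : (l + 1) * (q.c * p.b - q.b * p.c) = 0 := by linear_combination -h3
    rcases mul_eq_zero.1 this with h | h
    · linear_combination -h
    · exact absurd h hD
  · have hl'1 : l' + 1 ≠ 0 := fun h => hl' (by linear_combination h)
    have hp3 : p.b = 0 ∨ p.c = 0 := by
      rcases mul_eq_zero.1 h1 with h | h
      · exact absurd h hl'1
      · exact mul_eq_zero.1 h
    have hq3 : q.b = 0 ∨ q.c = 0 := by
      rcases mul_eq_zero.1 h2 with h | h
      · exact absurd h hl'1
      · exact mul_eq_zero.1 h
    rcases hp3 with hpb | hpc <;> rcases hq3 with hqb | hqc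
    · exact absurd (by rw [hpb, hqb]; ring) hE
    · -- p.b = 0, q.c = 0 : l * l' = 1
      right
      have hne : q.b * p.c ≠ 0 := by
        intro h0; apply hE; rw [hqc]; linear_combination l' * h0
      have : (l * l' - 1) * (q.b * p.c) = 0 := by
        rw [hpb, hqc] at h3; linear_combination -h3
      rcases mul_eq_zero.1 this with h | h
      · linear_combination h
      · exact absurd h hne
    · -- p.c = 0, q.b = 0 : l' = l
      left
      have hne : q.c * p.b ≠ 0 := by
        intro h0; apply hE; rw [hqb]; linear_combination h0
      have : (l' - l) * (q.c * p.b) = 0 := by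
        rw [hpc, hqb] at h3; linear_combination h3
      rcases mul_eq_zero.1 this with h | h
      · linear_combination h
      · exact absurd h hne
    · exact absurd (by rw [hpc, hqc]; ring) hE

end Quad


/-- `R_λ` and `R_{λ'}` are isomorphic as unital k-algebras if and only if
`λ' = λ` or `λλ' = 1`. -/
theorem Rl_iso_iff
    {k : Type*} [Field k] [IsAlgClosed k] [CharZero k] (l l' : k) :
    Nonempty (RingQuot (Rrel k l) ≃ₐ[k] RingQuot (Rrel k l')) ↔
      (l' = l ∨ l * l' = 1) := by
  constructor
  · rintro ⟨e⟩
    exact Quad.quad_forward ((Quad.equivQuad.symm.trans e).trans Quad.equivQuad)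
  · rintro (rfl | h)
    · exact ⟨AlgEquiv.refl⟩
    · exact ⟨(Quad.equivQuad.trans (Quad.swap l l' h)).trans Quad.equivQuad.symm⟩
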